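/- Let A be a symmetric positive semidefinite d×d real matrix with eigenvalues λ₁ ≥ λ₂ ≥ ⋯ ≥ λ_d and an orthonormal basis of eigenvectors v₁,…,v_d (with A v_i = λ_i v_i). For k ∈ {0,…,d−1}, let Q_k be the orthogonal projection onto span{v_{k+1},…,v_d} (the span of eigenvectors corresponding to the d−k smallest eigenvalues). Then for every z ∈ ℝ^d, ‖Q_k A z‖₂ ≤ √(λ_{k+1}) · √(zᵀ A z). Consequently, for any points x₁,…,x_n and any point x ∉ {x₁,…,x_n} with (x−x_i)ᵀA(x−x_i) > 0 for all i, the gradient of F(x) = (1/n)·Σ_{i=1}^n √((x−x_i)ᵀA(x−x_i)) satisfies ‖Q_k ∇F(x)‖₂ ≤ √(λ_{k+1}). -/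

import Mathlib

/-!
In the eigenbasis the coordinates of `A z` are `λᵢ ⟨vᵢ, z⟩`, so
`‖Q_k A z‖² = ∑_{i > k} λᵢ² ⟨vᵢ, z⟩² ≤ λ_{k+1} ∑ᵢ λᵢ ⟨vᵢ, z⟩² ≤ λ_{k+1} zᵀ A z`;
the last step is Bessel's inequality for the form `A`, i.e. positivity of `A` on the residual
`z - ∑ᵢ ⟨vᵢ, z⟩ vᵢ`. Each summand `A w / ‖w‖_A` of `∇F` therefore has `‖Q_k ·‖ ≤ √λ_{k+1}`,
and `∇F` is their average.
-/

noncomputable section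

open Matrix Finset

namespace Matrix

variable {m : Type*} [Fintype m]

theorem IsHermitian.dotProduct_mulVec_comm {A : Matrix m m ℝ} (hA : A.IsHermitian)
    (x y : m → ℝ) : x ⬝ᵥ A *ᵥ y = y ⬝ᵥ A *ᵥ x := by
  have hT : Aᵀ = A := by simpa [conjTranspose_eq_transpose_of_trivial] using hA.eq
  rw [dotProduct_mulVec, ← mulVec_transpose, hT, dotProduct_comm]

theorem IsHermitian.dotProduct_mulVec_of_mulVec_eq_smul {A : Matrix m m ℝ} (hA : A.IsHermitian)
    {v : m → ℝ} {μ : ℝ} (hv : A *ᵥ v = μ • v) (z : m → ℝ) :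
    v ⬝ᵥ A *ᵥ z = μ * (v ⬝ᵥ z) := by
  rw [hA.dotProduct_mulVec_comm, hv, dotProduct_smul, smul_eq_mul, dotProduct_comm]

theorem PosSemidef.nonneg_of_mulVec_eq_smul {A : Matrix m m ℝ} (hA : A.PosSemidef)
    {v : m → ℝ} {μ : ℝ} (hv0 : v ≠ 0) (hv : A *ᵥ v = μ • v) : 0 ≤ μ := by
  have hvv : 0 < v ⬝ᵥ v := by simpa using dotProduct_self_star_pos_iff.2 hv0
  have h := hA.dotProduct_mulVec_nonneg v
  rw [star_trivial, hv, dotProduct_smul, smul_eq_mul] at h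
  exact nonneg_of_mul_nonneg_left h hvv

end Matrix

section Orthonormal

variable {m κ : Type*} [Fintype m] {v : κ → m → ℝ}

def spanProj (v : κ → m → ℝ) (s : Finset κ) : (m → ℝ) →ₗ[ℝ] (m → ℝ) where
  toFun z := ∑ i ∈ s, (v i ⬝ᵥ z) • v i
  map_add' x y := by simp only [dotProduct_add, add_smul, sum_add_distrib]
  map_smul' c x := by simp only [dotProduct_smul, smul_eq_mul, mul_smul, smul_sum, RingHom.id_apply]

theorem spanProj_apply (s : Finset κ) (z : m → ℝ) :
    spanProj v s z = ∑ i ∈ s, (v i ⬝ᵥ z) • v i := rfl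

variable [DecidableEq κ]

theorem dotProduct_spanProj (hv : ∀ i j, v i ⬝ᵥ v j = if i = j then 1 else 0) {s : Finset κ}
    {j : κ} (hj : j ∈ s) (z : m → ℝ) : v j ⬝ᵥ spanProj v s z = v j ⬝ᵥ z := by
  simp only [spanProj_apply, dotProduct_sum, dotProduct_smul, hv, smul_eq_mul, mul_ite, mul_one,
    mul_zero, sum_ite_eq, if_pos hj]

theorem spanProj_dotProduct_self (hv : ∀ i j, v i ⬝ᵥ v j = if i = j then 1 else 0)
    (s : Finset κ) (z : m → ℝ) :
    spanProj v s z ⬝ᵥ spanProj v s z = ∑ i ∈ s, (v i ⬝ᵥ z) ^ 2 := by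
  nth_rw 1 [spanProj_apply]
  rw [sum_dotProduct]
  refine sum_congr rfl fun i hi => ?_
  rw [smul_dotProduct, dotProduct_spanProj hv hi, smul_eq_mul, sq]

theorem sum_mul_sq_dotProduct_le {A : Matrix m m ℝ} (hA : A.PosSemidef)
    (hv : ∀ i j, v i ⬝ᵥ v j = if i = j then 1 else 0) {lam : κ → ℝ}
    (h_eig : ∀ i, A *ᵥ v i = lam i • v i) (s : Finset κ) (z : m → ℝ) :
    ∑ i ∈ s, lam i * (v i ⬝ᵥ z) ^ 2 ≤ z ⬝ᵥ A *ᵥ z := by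
  set p := spanProj v s z
  have hp_mulVec : ∀ y, p ⬝ᵥ A *ᵥ y = ∑ i ∈ s, (v i ⬝ᵥ z) * (lam i * (v i ⬝ᵥ y)) := fun y => by
    simp only [p, spanProj_apply, sum_dotProduct, smul_dotProduct, smul_eq_mul,
      hA.1.dotProduct_mulVec_of_mulVec_eq_smul (h_eig _)]
  have hp_z : p ⬝ᵥ A *ᵥ z = ∑ i ∈ s, lam i * (v i ⬝ᵥ z) ^ 2 := by
    rw [hp_mulVec]
    exact sum_congr rfl fun i _ => by ring
  have hp_p : p ⬝ᵥ A *ᵥ p = ∑ i ∈ s, lam i * (v i ⬝ᵥ z) ^ 2 := by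
    rw [hp_mulVec]
    refine sum_congr rfl fun i hi => ?_
    rw [dotProduct_spanProj hv hi]
    ring
  have h := hA.dotProduct_mulVec_nonneg (z - p)
  rw [star_trivial, mulVec_sub, sub_dotProduct, dotProduct_sub, dotProduct_sub,
    hA.1.dotProduct_mulVec_comm z p, hp_z, hp_p] at h
  linarith

theorem spanProj_mulVec_dotProduct_self_le {A : Matrix m m ℝ} (hA : A.PosSemidef)
    (hv : ∀ i j, v i ⬝ᵥ v j = if i = j then 1 else 0) {lam : κ → ℝ}
    (h_eig : ∀ i, A *ᵥ v i = lam i • v i) {s : Finset κ} {μ : ℝ} (hμ : 0 ≤ μ)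
    (hle : ∀ i ∈ s, lam i ≤ μ) (z : m → ℝ) :
    spanProj v s (A *ᵥ z) ⬝ᵥ spanProj v s (A *ᵥ z) ≤ μ * (z ⬝ᵥ A *ᵥ z) := by
  have hlam : ∀ i, 0 ≤ lam i := fun i =>
    hA.nonneg_of_mulVec_eq_smul (fun h0 => by simpa [h0] using hv i i) (h_eig i)
  calc spanProj v s (A *ᵥ z) ⬝ᵥ spanProj v s (A *ᵥ z)
      = ∑ i ∈ s, lam i * (lam i * (v i ⬝ᵥ z) ^ 2) := by
        rw [spanProj_dotProduct_self hv]
        refine sum_congr rfl fun i _ => ?_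
        rw [hA.1.dotProduct_mulVec_of_mulVec_eq_smul (h_eig i)]
        ring
    _ ≤ ∑ i ∈ s, μ * (lam i * (v i ⬝ᵥ z) ^ 2) :=
        sum_le_sum fun i hi => by have := hlam i; gcongr; exact hle i hi
    _ = μ * ∑ i ∈ s, lam i * (v i ⬝ᵥ z) ^ 2 := (mul_sum _ _ _).symm
    _ ≤ μ * (z ⬝ᵥ A *ᵥ z) := by gcongr; exact sum_mul_sq_dotProduct_le hA hv h_eig s z

theorem norm_toLp_eq_sqrt_dotProduct (u : m → ℝ) : ‖WithLp.toLp 2 u‖ = √(u ⬝ᵥ u) := by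
  simp only [EuclideanSpace.norm_eq, Real.norm_eq_abs, sq_abs, dotProduct, ← sq]

theorem norm_toLp_spanProj_mulVec_le {A : Matrix m m ℝ} (hA : A.PosSemidef)
    (hv : ∀ i j, v i ⬝ᵥ v j = if i = j then 1 else 0) {lam : κ → ℝ}
    (h_eig : ∀ i, A *ᵥ v i = lam i • v i) {s : Finset κ} {μ : ℝ} (hμ : 0 ≤ μ)
    (hle : ∀ i ∈ s, lam i ≤ μ) (z : m → ℝ) :
    ‖WithLp.toLp 2 (spanProj v s (A *ᵥ z))‖ ≤ √μ * √(z ⬝ᵥ A *ᵥ z) := by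
  rw [norm_toLp_eq_sqrt_dotProduct, ← Real.sqrt_mul hμ]
  exact Real.sqrt_le_sqrt (spanProj_mulVec_dotProduct_self_le hA hv h_eig hμ hle z)

theorem norm_toLp_spanProj_inv_smul_mulVec_le {A : Matrix m m ℝ} (hA : A.PosSemidef)
    (hv : ∀ i j, v i ⬝ᵥ v j = if i = j then 1 else 0) {lam : κ → ℝ}
    (h_eig : ∀ i, A *ᵥ v i = lam i • v i) {s : Finset κ} {μ : ℝ} (hμ : 0 ≤ μ)
    (hle : ∀ i ∈ s, lam i ≤ μ) (w : m → ℝ) :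
    ‖WithLp.toLp 2 (spanProj v s ((√(w ⬝ᵥ A *ᵥ w))⁻¹ • A *ᵥ w))‖ ≤ √μ := by
  have h := norm_toLp_spanProj_mulVec_le hA hv h_eig hμ hle w
  rw [map_smul, WithLp.toLp_smul, norm_smul, norm_inv, Real.norm_of_nonneg (Real.sqrt_nonneg _)]
  rcases (Real.sqrt_nonneg (w ⬝ᵥ A *ᵥ w)).eq_or_lt with h0 | hpos
  · rw [← h0, _root_.inv_zero, zero_mul]
    exact Real.sqrt_nonneg μ
  · rwa [inv_mul_le_iff₀ hpos, mul_comm]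

end Orthonormal

theorem norm_inv_natCast_smul_sum_le {E : Type*} [SeminormedAddCommGroup E] [NormedSpace ℝ E]
    {n : ℕ} {f : Fin n → E} {c : ℝ} (hc : 0 ≤ c) (hf : ∀ i, ‖f i‖ ≤ c) :
    ‖(n : ℝ)⁻¹ • ∑ i, f i‖ ≤ c := by
  rcases n.eq_zero_or_pos with rfl | hn
  · simpa using hc
  have hsum : ‖∑ i, f i‖ ≤ n * c := by
    simpa using norm_sum_le_of_le univ fun i _ => hf i
  rw [norm_smul, norm_inv, Real.norm_natCast, inv_mul_le_iff₀ (by exact_mod_cast hn)]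
  exact hsum

/-- For a symmetric PSD matrix `A` with orthonormal eigenbasis `v₁,…,v_d` and
nonincreasing eigenvalues `λ₁ ≥ ⋯ ≥ λ_d`, the projection `Q_k` onto the span of the
eigenvectors of the `d−k` smallest eigenvalues satisfies `‖Q_k A z‖₂ ≤ √(λ_{k+1})·√(zᵀAz)`;
consequently the gradient of the average Mahalanobis distance `F` satisfies
`‖Q_k ∇F(x)‖₂ ≤ √(λ_{k+1})`. -/
theorem proj_mulVec_bound_and_geometric_median_gradient
    (d : ℕ) (A : Matrix (Fin d) (Fin d) ℝ) (hA : A.PosSemidef)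
    (lam : Fin d → ℝ) (v : Fin d → (Fin d → ℝ))
    (h_eig : ∀ i, A.mulVec (v i) = lam i • v i)
    (h_on : ∀ i j, v i ⬝ᵥ v j = if i = j then (1 : ℝ) else 0)
    (h_mono : ∀ i j : Fin d, i ≤ j → lam j ≤ lam i)
    (k : ℕ) (hk : k < d) :
    -- Q_k is the orthogonal projection onto span{v_{k+1},…,v_d}
    let Q : (Fin d → ℝ) → (Fin d → ℝ) :=
      fun z => ∑ i : Fin d, if k ≤ (i : ℕ) then (v i ⬝ᵥ z) • v i else 0;
    (∀ z : Fin d → ℝ,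
      Real.sqrt (Q (A.mulVec z) ⬝ᵥ Q (A.mulVec z))
        ≤ Real.sqrt (lam ⟨k, hk⟩) * Real.sqrt (z ⬝ᵥ A.mulVec z)) ∧
    (∀ (n : ℕ) (xs : Fin n → (Fin d → ℝ)) (x : Fin d → ℝ),
      (∀ i, x ≠ xs i) →
      (∀ i, 0 < (x - xs i) ⬝ᵥ A.mulVec (x - xs i)) →
      -- ∇F(x) = (1/n)·Σ_i A(x−x_i)/‖x−x_i‖_A
      let g : Fin d → ℝ := (n : ℝ)⁻¹ •
        ∑ i : Fin n, (Real.sqrt ((x - xs i) ⬝ᵥ A.mulVec (x - xs i)))⁻¹ • A.mulVec (x - xs i);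
      Real.sqrt (Q g ⬝ᵥ Q g) ≤ Real.sqrt (lam ⟨k, hk⟩)) := by
  intro Q
  set s : Finset (Fin d) := {i | k ≤ (i : ℕ)}
  have hQ : ∀ z, √(Q z ⬝ᵥ Q z) = ‖WithLp.toLp 2 (spanProj v s z)‖ := fun z => by
    rw [norm_toLp_eq_sqrt_dotProduct, spanProj_apply, sum_filter]
  have hμ : 0 ≤ lam ⟨k, hk⟩ :=
    hA.nonneg_of_mulVec_eq_smul (fun h0 => by simpa [h0] using h_on ⟨k, hk⟩ ⟨k, hk⟩) (h_eig _)
  have hle : ∀ i ∈ s, lam i ≤ lam ⟨k, hk⟩ := fun i hi =>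
    h_mono _ _ (Fin.le_iff_val_le_val.2 (by simpa [s] using hi))
  refine ⟨fun z => ?_, fun n xs x _ _ => ?_⟩
  · rw [hQ]
    exact norm_toLp_spanProj_mulVec_le hA h_on h_eig hμ hle z
  · intro g
    rw [hQ, map_smul, map_sum, WithLp.toLp_smul, WithLp.toLp_sum]
    exact norm_inv_natCast_smul_sum_le (Real.sqrt_nonneg _) fun i =>
      norm_toLp_spanProj_inv_smul_mulVec_le hA h_on h_eig hμ hle _

end
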